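/- arXiv:1010.5341 — 3 statements merged into one kernel-verified Lean document; each statement's English description precedes it below -/
import Mathlib

section
/- Let n ≥ 1 and let f(X) = a_0X^n + a_1X^{n-1} + ⋯ + a_n ∈ ℂ[X] with a_0 ≠ 0. Then every root z ∈ ℂ of f(z) = 0 satisfies |z| ≤ (2^{1/n} − 1)^{-1} · max_{1 ≤ k ≤ n} |a_k / (a_0 · binom(n,k))|^{1/k}. -/
/-!
Let `M` be the maximum in the bound, so that `‖aₖ‖ ≤ ‖a₀‖ · C(n,k) · Mᵏ` for every `k`.
At a root the leading term `a₀zⁿ` cancels the others, so its norm is at most half the sum of the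
norms of all terms, which the binomial theorem bounds by `‖a₀‖ (‖z‖ + M)ⁿ`. Hence
`2‖z‖ⁿ ≤ (‖z‖ + M)ⁿ`, and taking `n`-th roots gives `2^(1/n) ‖z‖ ≤ ‖z‖ + M`.
-/

open Finset

theorem two_mul_norm_le_sum_norm_of_sum_eq_zero {ι E : Type*} [SeminormedAddCommGroup E]
    [DecidableEq ι] {s : Finset ι} {f : ι → E} (hf : ∑ j ∈ s, f j = 0) {i : ι} (hi : i ∈ s) :
    2 * ‖f i‖ ≤ ∑ j ∈ s, ‖f j‖ := by
  rw [← add_sum_erase s f hi, add_eq_zero_iff_eq_neg] at hf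
  have hrest : ‖f i‖ ≤ ∑ j ∈ s.erase i, ‖f j‖ := by
    rw [hf, norm_neg]
    exact norm_sum_le _ _
  rw [← add_sum_erase s _ hi]
  linarith

theorem norm_le_norm_mul_pow_of_norm_div_rpow_inv_le {𝕜 : Type*} [NormedDivisionRing 𝕜]
    {x c : 𝕜} {k : ℕ} {M : ℝ} (hc : c ≠ 0) (hk : k ≠ 0) (h : ‖x / c‖ ^ (k : ℝ)⁻¹ ≤ M) :
    ‖x‖ ≤ ‖c‖ * M ^ k := by
  have hM : 0 ≤ M := (Real.rpow_nonneg (norm_nonneg _) _).trans h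
  rw [Real.rpow_inv_le_iff_of_pos (norm_nonneg _) hM (by positivity), Real.rpow_natCast,
    norm_div, div_le_iff₀' (norm_pos_iff.mpr hc)] at h
  exact h

theorem two_mul_norm_pow_le_add_pow_of_root {𝕜 : Type*} [NormedDivisionRing 𝕜] {n : ℕ}
    {a : ℕ → 𝕜} {z : 𝕜} {M : ℝ} (ha : a 0 ≠ 0)
    (hM : ∀ k ∈ Icc 1 n, ‖a k‖ ≤ ‖a 0‖ * n.choose k * M ^ k)
    (hz : ∑ k ∈ range (n + 1), a k * z ^ (n - k) = 0) :
    2 * ‖z‖ ^ n ≤ (M + ‖z‖) ^ n := by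
  have hterm : ∀ k ∈ range (n + 1),
      ‖a k * z ^ (n - k)‖ ≤ ‖a 0‖ * (M ^ k * ‖z‖ ^ (n - k) * n.choose k) := by
    intro k hk
    rw [norm_mul, norm_pow]
    rcases Nat.eq_zero_or_pos k with rfl | hk0
    · simp
    · have := hM k (mem_Icc.mpr ⟨hk0, Nat.lt_succ_iff.mp (mem_range.mp hk)⟩)
      calc ‖a k‖ * ‖z‖ ^ (n - k) ≤ ‖a 0‖ * n.choose k * M ^ k * ‖z‖ ^ (n - k) := by gcongr
        _ = _ := by ring
  have hsum : ‖a 0‖ * (2 * ‖z‖ ^ n) ≤ ‖a 0‖ * (M + ‖z‖) ^ n :=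
    calc ‖a 0‖ * (2 * ‖z‖ ^ n) = 2 * ‖a 0 * z ^ (n - 0)‖ := by
          rw [Nat.sub_zero, norm_mul, norm_pow, mul_left_comm]
      _ ≤ ∑ k ∈ range (n + 1), ‖a k * z ^ (n - k)‖ :=
        two_mul_norm_le_sum_norm_of_sum_eq_zero hz (mem_range.mpr n.succ_pos)
      _ ≤ ∑ k ∈ range (n + 1), ‖a 0‖ * (M ^ k * ‖z‖ ^ (n - k) * n.choose k) := sum_le_sum hterm
      _ = ‖a 0‖ * (M + ‖z‖) ^ n := by rw [← mul_sum, add_pow]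
  exact le_of_mul_le_mul_left hsum (norm_pos_iff.mpr ha)

theorem le_inv_mul_of_two_mul_pow_le_add_pow {n : ℕ} {x M : ℝ} (hn : n ≠ 0) (hx : 0 ≤ x)
    (hM : 0 ≤ M) (h : 2 * x ^ n ≤ (x + M) ^ n) :
    x ≤ ((2 : ℝ) ^ (n : ℝ)⁻¹ - 1)⁻¹ * M := by
  have hroot : (2 : ℝ) ^ (n : ℝ)⁻¹ * x ≤ x + M := by
    rw [← pow_le_pow_iff_left₀ (by positivity) (by positivity) hn, mul_pow,
      Real.rpow_inv_natCast_pow zero_le_two hn]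
    exact h
  have hc : 0 < (2 : ℝ) ^ (n : ℝ)⁻¹ - 1 :=
    sub_pos.mpr (Real.one_lt_rpow one_lt_two (by positivity))
  rw [le_inv_mul_iff₀ hc]
  linarith

/-- Root bound: every complex root `z` of `a₀Xⁿ + a₁X^(n-1) + ⋯ + aₙ` (with `a₀ ≠ 0`) satisfies
`|z| ≤ (2^(1/n) - 1)⁻¹ · max_{1 ≤ k ≤ n} |aₖ/(a₀·binom(n,k))|^(1/k)`. -/
theorem root_bound (n : ℕ) (hn : 1 ≤ n) (a : ℕ → ℂ) (ha : a 0 ≠ 0) (z : ℂ)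
    (hz : ∑ k ∈ Finset.range (n + 1), a k * z ^ (n - k) = 0) :
    ‖z‖ ≤ ((2 : ℝ) ^ ((n : ℝ)⁻¹) - 1)⁻¹ *
      (Finset.Icc 1 n).sup' (Finset.nonempty_Icc.mpr hn)
        (fun k => (‖a k / (a 0 * (n.choose k : ℂ))‖) ^ ((k : ℝ)⁻¹)) := by
  set r : ℕ → ℝ := fun k => ‖a k / (a 0 * (n.choose k : ℂ))‖ ^ (k : ℝ)⁻¹
  set M := (Icc 1 n).sup' (nonempty_Icc.mpr hn) r
  have hcoeff : ∀ k ∈ Icc 1 n, ‖a k‖ ≤ ‖a 0‖ * n.choose k * M ^ k := by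
    intro k hk
    obtain ⟨hk1, hkn⟩ := mem_Icc.mp hk
    have hchoose : (n.choose k : ℂ) ≠ 0 := Nat.cast_ne_zero.mpr (Nat.choose_pos hkn).ne'
    have h := norm_le_norm_mul_pow_of_norm_div_rpow_inv_le (mul_ne_zero ha hchoose)
      (Nat.one_le_iff_ne_zero.mp hk1) (le_sup' r hk)
    rwa [norm_mul, Complex.norm_natCast] at h
  have hM : 0 ≤ M :=
    (Real.rpow_nonneg (norm_nonneg _) _).trans (le_sup' r (mem_Icc.mpr ⟨le_rfl, hn⟩))
  refine le_inv_mul_of_two_mul_pow_le_add_pow (by omega) (norm_nonneg z) hM ?_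
  rw [add_comm]
  exact two_mul_norm_pow_le_add_pow_of_root ha hcoeff hz
end

section
/- Let n be a positive integer and G a subgroup of the symmetric group S_n. Then there exists a polynomial Φ ∈ ℤ[z, a_1, …, a_n] with the following two properties. (i) For every monic polynomial f(X) = X^n + a_1X^{n-1} + ⋯ + a_n ∈ ℤ[X] with complex roots α_1, …, α_n listed with multiplicity, the evaluation of Φ at (z, a_1, …, a_n) equals ∏_σ ( z − Σ_{τ ∈ G} α_{σ(τ(1))} · α_{σ(τ(2))}² ⋯ α_{σ(τ(n))}^n ), where σ runs over a set of representatives of the left cosets of G in S_n (this product is independent of the choice of representatives and of the labelling of the roots). (ii) If moreover f is separable and has Galois group G, then the polynomial z ↦ Φ(z, a_1, …, a_n) has an integer root z. -/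
/-!
Let `θ_σ = ∑_{τ ∈ G} ∏ᵢ X_{σ(τ(i))}^(i+1)`; it depends only on the coset `σG`, and `Sₙ` permutes
the `θ_c` by permuting the variables. Hence the coefficients of `∏_c (z - θ_c)` are symmetric
polynomials, i.e. polynomials in the elementary symmetric `e_k`, and substituting
`e_k = (-1)^k a_k` (Vieta) gives `Φ`. If `Gal(f) = G` for a labelling `α` of the roots, the
Galois group permutes the roots through `G` and so fixes `θ_1(α)`, which is therefore rational;
being an algebraic integer, it is an integer root of `Φ(z, a)`.
-/

open Polynomial

/-- A monic separable polynomial `f ∈ ℚ[X]` of degree `n` *has Galois group `G`*, for `G` a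
subgroup of the symmetric group on `n` letters, if there is a labelling of the `n` distinct
roots of `f` in its splitting field by `Fin n` such that the subgroup `G` consists exactly of
those permutations of `Fin n` that are induced by elements of the Galois group of the splitting
field of `f` over `ℚ` acting naturally on the roots. -/
def HasGaloisGroup (n : ℕ) (f : Polynomial ℚ) (G : Subgroup (Equiv.Perm (Fin n))) : Prop :=
  ∃ e : Fin n ≃ (f.rootSet f.SplittingField),
    ∀ σ : Equiv.Perm (Fin n), σ ∈ G ↔ ∃ g : f.Gal, ∀ i : Fin n, g • (e i) = e (σ i)

section MonicOfCoeffs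

variable {R : Type*} {n : ℕ}

noncomputable def monicOfCoeffs [Semiring R] (a : Fin n → R) : R[X] :=
  X ^ n + ∑ i : Fin n, C (a i) * X ^ (n - 1 - (i : ℕ))

theorem degree_sum_C_mul_X_pow_lt [Semiring R] (a : Fin n → R) :
    (∑ i : Fin n, C (a i) * X ^ (n - 1 - (i : ℕ))).degree < (n : WithBot ℕ) := by
  refine (degree_sum_le _ _).trans_lt
    ((Finset.sup_lt_iff (WithBot.bot_lt_coe n)).2 fun i _ => ?_)
  exact (degree_C_mul_X_pow_le _ _).trans_lt
    (WithBot.coe_lt_coe.2 (show n - 1 - (i : ℕ) < n by omega))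

theorem monic_monicOfCoeffs [Semiring R] (a : Fin n → R) : (monicOfCoeffs a).Monic :=
  monic_X_pow_add (degree_sum_C_mul_X_pow_lt a)

theorem map_monicOfCoeffs [Semiring R] {S : Type*} [Semiring S] (f : R →+* S) (a : Fin n → R) :
    (monicOfCoeffs a).map f = monicOfCoeffs (f ∘ a) := by
  simp [monicOfCoeffs, Polynomial.map_sum]

theorem coeff_monicOfCoeffs [Semiring R] (a : Fin n → R) (i : Fin n) :
    (monicOfCoeffs a).coeff (n - 1 - i) = a i := by
  rw [monicOfCoeffs, coeff_add, coeff_X_pow, if_neg (by omega), zero_add, finsetSum_coeff,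
    Finset.sum_eq_single i (fun j _ hj => ?_) (by simp)]
  · simp
  · rw [coeff_C_mul_X_pow, if_neg fun h => hj (Fin.ext (by omega))]

theorem aeval_esymm_of_monicOfCoeffs_eq_prod [CommRing R] {S : Type*} [CommRing S] [Algebra R S]
    {a α : Fin n → S} (h : monicOfCoeffs a = ∏ i, (X - C (α i))) (i : Fin n) :
    MvPolynomial.aeval α (MvPolynomial.esymm (Fin n) R (i + 1)) = (-1) ^ (i + 1 : ℕ) * a i := by
  have hcard : Multiset.card (Finset.univ.val.map α) = n := by simp
  have vieta := (Finset.univ.val.map α).prod_X_sub_C_coeff (k := n - 1 - i) (by omega)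
  rw [Multiset.map_map, hcard, show n - (n - 1 - i) = i + 1 by omega] at vieta
  simp only [Function.comp_def] at vieta
  rw [MvPolynomial.aeval_esymm_eq_multiset_esymm, ← coeff_monicOfCoeffs a i, h,
    Finset.prod_eq_multiset_prod, vieta, ← mul_assoc, ← pow_add, Even.neg_one_pow ⟨_, rfl⟩,
    one_mul]

theorem isIntegral_of_monicOfCoeffs_eq_prod [CommRing R] {S : Type*} [CommRing S] [Algebra R S]
    {a : Fin n → R} {α : Fin n → S}
    (h : monicOfCoeffs (algebraMap R S ∘ a) = ∏ i, (X - C (α i))) (i : Fin n) :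
    IsIntegral R (α i) :=
  ⟨monicOfCoeffs a, monic_monicOfCoeffs a, by
    rw [← eval_map, map_monicOfCoeffs, h, eval_prod]
    exact Finset.prod_eq_zero (Finset.mem_univ i) (by simp)⟩

end MonicOfCoeffs

theorem exists_map_aeval_esymm_eq_of_isSymmetric {R σ : Type*} [CommRing R] [Fintype σ] {n : ℕ}
    (hn : Fintype.card σ ≤ n) (P : (MvPolynomial σ R)[X]) (hP : ∀ k, (P.coeff k).IsSymmetric) :
    ∃ Q : (MvPolynomial (Fin n) R)[X],
      Q.map (MvPolynomial.aeval (R := R) fun i : Fin n => MvPolynomial.esymm σ R (i + 1) :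
        MvPolynomial (Fin n) R →+* MvPolynomial σ R) = P := by
  refine (mem_lifts P).1 ((lifts_iff_coeff_lifts P).2 fun k => ?_)
  obtain ⟨q, hq⟩ := MvPolynomial.esymmAlgHom_surjective R hn ⟨P.coeff k, hP k⟩
  exact ⟨q, by simpa [MvPolynomial.esymmAlgHom_apply] using congrArg Subtype.val hq⟩

theorem map_eq_prod_X_sub_C_of_equiv_rootSet {F K ι : Type*} [Field F] [Field K] [Algebra F K]
    [Fintype ι] {p : F[X]} (hm : p.Monic) (hsep : p.Separable)
    (hspl : (p.map (algebraMap F K)).Splits) (e : ι ≃ p.rootSet K) :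
    p.map (algebraMap F K) = ∏ i, (X - C (e i : K)) := by
  classical
  calc p.map (algebraMap F K) = ((p.aroots K).map (X - C ·)).prod :=
        (prod_multiset_X_sub_C_of_monic_of_roots_card_eq (hm.map _)
          (splits_iff_card_roots.1 hspl)).symm
    _ = ∏ x ∈ (p.aroots K).toFinset, (X - C x) := by
        rw [Finset.prod_eq_multiset_prod, Multiset.toFinset_val,
          Multiset.dedup_eq_self.mpr (nodup_roots hsep.map)]
    _ = ∏ x : p.rootSet K, (X - C (x : K)) :=
        Finset.prod_subtype _ (fun x => by rw [rootSet_def, Finset.mem_coe]) _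
    _ = ∏ i, (X - C (e i : K)) := (Fintype.prod_equiv e _ _ fun _ => rfl).symm

theorem isIntegral_aeval {R A σ : Type*} [CommRing R] [CommRing A] [Algebra R A] {x : σ → A}
    (hx : ∀ i, IsIntegral R (x i)) (p : MvPolynomial σ R) :
    IsIntegral R (MvPolynomial.aeval x p) := by
  have hp : MvPolynomial.aeval x p ∈ Algebra.adjoin R (Set.range x) := by
    rw [Algebra.adjoin_range_eq_range_aeval]
    exact ⟨p, rfl⟩
  exact Algebra.adjoin_le (S := integralClosure R A) (Set.range_subset_iff.2 hx) hp

theorem exists_algebraMap_eq_of_isIntegral {R F K : Type*} [CommRing R] [IsDomain R]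
    [IsIntegrallyClosed R] [Field F] [Algebra R F] [IsFractionRing R F] [Field K] [Algebra F K]
    [Algebra R K] [IsScalarTower R F K] {x : K} (hx : x ∈ Set.range (algebraMap F K))
    (hint : IsIntegral R x) : ∃ r : R, algebraMap R K r = x := by
  obtain ⟨y, rfl⟩ := hx
  obtain ⟨r, rfl⟩ := IsIntegrallyClosed.isIntegral_iff.1
    ((isIntegral_algebraMap_iff (algebraMap F K).injective).1 hint)
  exact ⟨r, IsScalarTower.algebraMap_apply R F K r⟩

section Resolvent

open scoped Classical

variable (R : Type*) [CommRing R] {n : ℕ} (G : Subgroup (Equiv.Perm (Fin n)))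

noncomputable def resolventInvariant (σ : Equiv.Perm (Fin n)) : MvPolynomial (Fin n) R :=
  ∑ τ : G, ∏ i : Fin n, MvPolynomial.X (σ ((τ : Equiv.Perm (Fin n)) i)) ^ ((i : ℕ) + 1)

theorem aeval_resolventInvariant {S : Type*} [CommRing S] [Algebra R S] (α : Fin n → S)
    (σ : Equiv.Perm (Fin n)) :
    MvPolynomial.aeval α (resolventInvariant R G σ) =
      ∑ τ : G, ∏ i : Fin n, α (σ ((τ : Equiv.Perm (Fin n)) i)) ^ ((i : ℕ) + 1) := by
  simp [resolventInvariant]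

theorem resolventInvariant_mul_of_mem (σ : Equiv.Perm (Fin n)) {τ : Equiv.Perm (Fin n)}
    (hτ : τ ∈ G) : resolventInvariant R G (σ * τ) = resolventInvariant R G σ :=
  Fintype.sum_equiv (Equiv.mulLeft ⟨τ, hτ⟩) _ _ fun _ => by simp [Equiv.Perm.mul_apply]

theorem rename_resolventInvariant (π σ : Equiv.Perm (Fin n)) :
    MvPolynomial.rename π (resolventInvariant R G σ) = resolventInvariant R G (π * σ) := by
  simp [resolventInvariant, map_sum, map_prod, Equiv.Perm.mul_apply]

theorem aeval_comp_resolventInvariant_one {S : Type*} [CommRing S] [Algebra R S] (β : Fin n → S)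
    {σ : Equiv.Perm (Fin n)} (hσ : σ ∈ G) :
    MvPolynomial.aeval (β ∘ σ) (resolventInvariant R G 1) =
      MvPolynomial.aeval β (resolventInvariant R G 1) := by
  rw [← MvPolynomial.aeval_rename, rename_resolventInvariant, mul_one, ← one_mul σ,
    resolventInvariant_mul_of_mem R G 1 hσ]

noncomputable def cosetResolventInvariant : Equiv.Perm (Fin n) ⧸ G → MvPolynomial (Fin n) R :=
  Quotient.lift (resolventInvariant R G) fun σ σ' h => by
    rw [← mul_inv_cancel_left σ σ', resolventInvariant_mul_of_mem R G σ
      (QuotientGroup.leftRel_apply.1 h)]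

@[simp]
theorem cosetResolventInvariant_mk (σ : Equiv.Perm (Fin n)) :
    cosetResolventInvariant R G σ = resolventInvariant R G σ :=
  rfl

theorem rename_cosetResolventInvariant (π : Equiv.Perm (Fin n)) (c : Equiv.Perm (Fin n) ⧸ G) :
    MvPolynomial.rename π (cosetResolventInvariant R G c) =
      cosetResolventInvariant R G (π • c) := by
  induction c using QuotientGroup.induction_on with
  | H σ => exact rename_resolventInvariant R G π σ

noncomputable def genericResolvent : (MvPolynomial (Fin n) R)[X] :=
  ∏ c : Equiv.Perm (Fin n) ⧸ G, (X - C (cosetResolventInvariant R G c))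

theorem isSymmetric_coeff_genericResolvent (k : ℕ) :
    ((genericResolvent R G).coeff k).IsSymmetric := by
  intro π
  have invariant :
      (genericResolvent R G).map (MvPolynomial.rename π).toRingHom = genericResolvent R G := by
    rw [genericResolvent, Polynomial.map_prod]
    refine Fintype.prod_equiv (MulAction.toPerm π) _ _ fun c => ?_
    simp [rename_cosetResolventInvariant]
  conv_rhs => rw [← invariant, coeff_map]
  rfl

noncomputable def esymmResolvent : (MvPolynomial (Fin n) R)[X] :=
  (exists_map_aeval_esymm_eq_of_isSymmetric (Fintype.card_fin n).le _
    (isSymmetric_coeff_genericResolvent R G)).choose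

theorem map_esymmResolvent :
    (esymmResolvent R G).map
        (MvPolynomial.aeval (R := R) fun i : Fin n => MvPolynomial.esymm (Fin n) R (i + 1) :
          MvPolynomial (Fin n) R →+* MvPolynomial (Fin n) R) =
      genericResolvent R G :=
  (exists_map_aeval_esymm_eq_of_isSymmetric (Fintype.card_fin n).le _
    (isSymmetric_coeff_genericResolvent R G)).choose_spec

/-- The variable `i.succ` stands for the coefficient `aᵢ₊₁`; by Vieta, `eᵢ₊₁(α) = (-1)ⁱ⁺¹ aᵢ₊₁`. -/
noncomputable def galoisResolvent : MvPolynomial (Fin (n + 1)) R :=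
  (esymmResolvent R G).eval₂
    (MvPolynomial.aeval fun i : Fin n => (-1) ^ (i + 1 : ℕ) * MvPolynomial.X i.succ).toRingHom
    (MvPolynomial.X 0)

theorem aeval_galoisResolvent {S : Type*} [CommRing S] [Algebra R S] {a α : Fin n → S}
    (h : monicOfCoeffs a = ∏ i, (X - C (α i))) (z : S) :
    MvPolynomial.aeval (Fin.cons z a) (galoisResolvent R G) =
      ∏ c : Equiv.Perm (Fin n) ⧸ G,
        (z - MvPolynomial.aeval α (cosetResolventInvariant R G c)) := by
  have vieta : (MvPolynomial.aeval (Fin.cons z a : Fin (n + 1) → S)).comp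
        (MvPolynomial.aeval fun i : Fin n => (-1) ^ (i + 1 : ℕ) * MvPolynomial.X i.succ) =
      (MvPolynomial.aeval α).comp
        (MvPolynomial.aeval fun i : Fin n => MvPolynomial.esymm (Fin n) R (i + 1)) :=
    MvPolynomial.algHom_ext fun i => by simp [aeval_esymm_of_monicOfCoeffs_eq_prod h]
  rw [galoisResolvent, ← AlgHom.coe_toRingHom, Polynomial.hom_eval₂, AlgHom.toRingHom_eq_coe,
    ← AlgHom.comp_toRingHom, vieta, AlgHom.comp_toRingHom, ← Polynomial.eval₂_map,
    map_esymmResolvent, genericResolvent, eval₂_finsetProd]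
  simp

theorem aeval_galoisResolvent_resolventInvariant_one {S : Type*} [CommRing S] [Algebra R S]
    {a α : Fin n → S} (h : monicOfCoeffs a = ∏ i, (X - C (α i))) :
    MvPolynomial.aeval (Fin.cons (MvPolynomial.aeval α (resolventInvariant R G 1)) a)
      (galoisResolvent R G) = 0 := by
  rw [aeval_galoisResolvent R G h]
  exact Finset.prod_eq_zero (Finset.mem_univ (QuotientGroup.mk 1))
    (by rw [cosetResolventInvariant_mk, sub_self])

theorem aeval_resolventInvariant_one_mem_range {F : Type*} [Field F] [Algebra R F] {p : F[X]}
    (hp : p.Separable) {β : Fin n → p.SplittingField}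
    (hβ : ∀ g : p.Gal, ∃ σ ∈ G, ∀ i, g (β i) = β (σ i)) :
    MvPolynomial.aeval β (resolventInvariant R G 1) ∈
      Set.range (algebraMap F p.SplittingField) := by
  have : IsGalois F p.SplittingField := IsGalois.of_separable_splitting_field hp
  refine (IsGalois.mem_range_algebraMap_iff_fixed _).2 fun g => ?_
  obtain ⟨σ, hσ, hgβ⟩ := hβ g
  calc g (MvPolynomial.aeval β (resolventInvariant R G 1))
      = (g.toAlgHom.restrictScalars R) (MvPolynomial.aeval β (resolventInvariant R G 1)) := rfl
    _ = MvPolynomial.aeval (β ∘ σ) (resolventInvariant R G 1) := by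
        rw [MvPolynomial.comp_aeval_apply]
        exact congrArg (MvPolynomial.aeval · _) (funext hgβ)
    _ = _ := aeval_comp_resolventInvariant_one R G β hσ

end Resolvent

theorem exists_int_eval_galoisResolvent_eq_zero {n : ℕ} {G : Subgroup (Equiv.Perm (Fin n))}
    (a : Fin n → ℤ) (hsep : (monicOfCoeffs fun i => (a i : ℚ)).Separable)
    (hG : HasGaloisGroup n (monicOfCoeffs fun i => (a i : ℚ)) G) :
    ∃ z : ℤ, MvPolynomial.eval (Fin.cons z a) (galoisResolvent ℤ G) = 0 := by
  have hf := map_monicOfCoeffs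
    (algebraMap ℚ (monicOfCoeffs fun i => (a i : ℚ)).SplittingField) fun i => (a i : ℚ)
  have hm := monic_monicOfCoeffs fun i => (a i : ℚ)
  generalize monicOfCoeffs (fun i => (a i : ℚ)) = f at hf hm hsep hG
  obtain ⟨e, he⟩ := hG
  have hroots : monicOfCoeffs (algebraMap ℤ f.SplittingField ∘ a) =
      ∏ i, (X - C (e i : f.SplittingField)) := by
    refine Eq.trans ?_ (hf.symm.trans
      (map_eq_prod_X_sub_C_of_equiv_rootSet hm hsep (SplittingField.splits f) e))
    congr 1
  have hperm (g : f.Gal) : ∃ σ ∈ G, ∀ i, g (e i : f.SplittingField) = e (σ i) :=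
    ⟨e.trans ((MulAction.toPerm g).trans e.symm), (he _).2 ⟨g, fun i => by simp⟩,
      fun i => by
        simp only [Equiv.trans_apply, MulAction.toPerm_apply, Equiv.apply_symm_apply]
        rfl⟩
  obtain ⟨z, hz⟩ := exists_algebraMap_eq_of_isIntegral (F := ℚ)
    (aeval_resolventInvariant_one_mem_range ℤ G hsep hperm)
    (isIntegral_aeval (isIntegral_of_monicOfCoeffs_eq_prod hroots) _)
  refine ⟨z, (algebraMap ℤ f.SplittingField).injective_int ?_⟩
  rw [map_zero, ← MvPolynomial.aeval_eq_eval, ← MvPolynomial.aeval_algebraMap_apply,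
    Fin.comp_cons, hz]
  exact aeval_galoisResolvent_resolventInvariant_one ℤ G hroots

theorem exists_galois_resolvent_general (n : ℕ) (G : Subgroup (Equiv.Perm (Fin n))) :
    ∃ Φ : MvPolynomial (Fin (n + 1)) ℤ,
      (∀ rep : (Equiv.Perm (Fin n) ⧸ G) → Equiv.Perm (Fin n),
        (∀ c : Equiv.Perm (Fin n) ⧸ G, QuotientGroup.mk (rep c) = c) →
        ∀ (a : Fin n → ℤ) (α : Fin n → ℂ),
          (X ^ n + ∑ i : Fin n, Polynomial.C ((a i : ℂ)) * X ^ (n - 1 - (i : ℕ)) :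
              Polynomial ℂ) = ∏ i : Fin n, (X - Polynomial.C (α i)) →
          ∀ z : ℂ,
            MvPolynomial.eval (Fin.cons z (fun i => (a i : ℂ)))
                (MvPolynomial.map (Int.castRingHom ℂ) Φ) =
              ∏ᶠ c : Equiv.Perm (Fin n) ⧸ G,
                (z - ∑ᶠ τ : G,
                  ∏ i : Fin n, α (rep c ((τ : Equiv.Perm (Fin n)) i)) ^ ((i : ℕ) + 1))) ∧
      (∀ a : Fin n → ℤ,
        (X ^ n + ∑ i : Fin n, Polynomial.C ((a i : ℚ)) * X ^ (n - 1 - (i : ℕ)) :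
            Polynomial ℚ).Separable →
        HasGaloisGroup n
          (X ^ n + ∑ i : Fin n, Polynomial.C ((a i : ℚ)) * X ^ (n - 1 - (i : ℕ))) G →
        ∃ z : ℤ, MvPolynomial.eval (Fin.cons z a) Φ = 0) := by
  classical
  refine ⟨galoisResolvent ℤ G, fun rep hrep a α h z => ?_,
    fun a => exists_int_eval_galoisResolvent_eq_zero a⟩
  rw [MvPolynomial.eval_map, ← algebraMap_int_eq, ← MvPolynomial.aeval_def,
    aeval_galoisResolvent ℤ G h, finprod_eq_prod_of_fintype]
  refine Finset.prod_congr rfl fun c _ => ?_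
  rw [← congrArg (cosetResolventInvariant ℤ G) (hrep c), cosetResolventInvariant_mk,
    aeval_resolventInvariant, finsum_eq_sum_of_fintype]

/-- Existence of the Galois resolvent `Φ(z; a₁, …, aₙ)` attached to a subgroup `G ≤ Sₙ`:
an integer polynomial in `z, a₁, …, aₙ` (the variable `0` of `Fin (n+1)` playing the role of
`z` and the variable `i+1` the role of `a_{i+1}`) such that
(i) whenever `Xⁿ + a₁X^(n-1) + ⋯ + aₙ = ∏ (X - αᵢ)` over `ℂ`, the value `Φ(z; a₁, …, aₙ)`
equals `∏_σ (z - ∑_{τ ∈ G} α_{σ(τ(1))} α_{σ(τ(2))}² ⋯ α_{σ(τ(n))}ⁿ)`, the product running over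
any set of representatives `σ` of the left cosets of `G` in `Sₙ`, and
(ii) if the monic integer polynomial `Xⁿ + a₁X^(n-1) + ⋯ + aₙ` is separable and has Galois
group `G`, then `z ↦ Φ(z; a₁, …, aₙ)` has an integer root. -/
theorem exists_galois_resolvent (n : ℕ) (hn : 0 < n) (G : Subgroup (Equiv.Perm (Fin n))) :
    ∃ Φ : MvPolynomial (Fin (n + 1)) ℤ,
      (∀ rep : (Equiv.Perm (Fin n) ⧸ G) → Equiv.Perm (Fin n),
        (∀ c : Equiv.Perm (Fin n) ⧸ G, QuotientGroup.mk (rep c) = c) →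
        ∀ (a : Fin n → ℤ) (α : Fin n → ℂ),
          (X ^ n + ∑ i : Fin n, Polynomial.C ((a i : ℂ)) * X ^ (n - 1 - (i : ℕ)) :
              Polynomial ℂ) = ∏ i : Fin n, (X - Polynomial.C (α i)) →
          ∀ z : ℂ,
            MvPolynomial.eval (Fin.cons z (fun i => (a i : ℂ)))
                (MvPolynomial.map (Int.castRingHom ℂ) Φ) =
              ∏ᶠ c : Equiv.Perm (Fin n) ⧸ G,
                (z - ∑ᶠ τ : G,
                  ∏ i : Fin n, α (rep c ((τ : Equiv.Perm (Fin n)) i)) ^ ((i : ℕ) + 1))) ∧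
      (∀ a : Fin n → ℤ,
        (X ^ n + ∑ i : Fin n, Polynomial.C ((a i : ℚ)) * X ^ (n - 1 - (i : ℕ)) :
            Polynomial ℚ).Separable →
        HasGaloisGroup n
          (X ^ n + ∑ i : Fin n, Polynomial.C ((a i : ℚ)) * X ^ (n - 1 - (i : ℕ))) G →
        ∃ z : ℤ, MvPolynomial.eval (Fin.cons z a) Φ = 0) :=
  exists_galois_resolvent_general n G
end

section
/- Let n and r be coprime positive integers with n > r, and let ε > 0. Then there exists a constant C, depending only on n and ε, such that for every real H ≥ 1 the number of pairs (a_r, a_n) ∈ ℤ² with |a_r| ≤ H, |a_n| ≤ H and such that the trinomial X^n + a_rX^{n-r} + a_n has an integer root is at most C·H^{1+1/n+ε}. -/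
/-!
If `b ≠ 0` and `x` is an integer root of `X^n + a X^(n-r) + b`, then `x ∣ b` (as `n - r ≥ 1`) and
`a = -(x^n + b) / x^(n-r)` is determined by `(x, b)`. So besides the `2H + 1` pairs with `b = 0`,
every pair is the image of some `(x, b)` with `x ∣ b` and `0 < |b| ≤ H`; up to the four choices of
signs there are `∑_{d ≤ H} ⌊H / d⌋ ≤ H (1 + log H) = O(H^(1+ε))` of those.
-/

open Finset Real

theorem dvd_of_trinomial_root {n r : ℕ} (hrn : r < n) {x a b : ℤ}
    (h : x ^ n + a * x ^ (n - r) + b = 0) : x ∣ b := by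
  have hb : b = -(x ^ n + a * x ^ (n - r)) := by linarith
  rw [hb]
  exact (dvd_add (dvd_pow_self x (by omega))
    (dvd_mul_of_dvd_right (dvd_pow_self x (by omega)) a)).neg_right

theorem eq_ediv_of_trinomial_root {n r : ℕ} {x a b : ℤ} (hx : x ≠ 0)
    (h : x ^ n + a * x ^ (n - r) + b = 0) : a = -(x ^ n + b) / x ^ (n - r) :=
  (Int.ediv_eq_of_eq_mul_left (pow_ne_zero _ hx) (by linarith)).symm

def divisorPairs (K : ℕ) : Finset (ℕ × ℕ) := {p ∈ Icc 1 K ×ˢ Icc 1 K | p.1 ∣ p.2}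

theorem card_divisorPairs (K : ℕ) : #(divisorPairs K) = ∑ d ∈ Icc 1 K, K / d := by
  rw [divisorPairs, card_filter, sum_product]
  refine sum_congr rfl fun d _ => ?_
  rw [← card_filter, ← Nat.Ioc_filter_dvd_card_eq_div]
  exact congrArg (fun s => #{m ∈ s | d ∣ m}) (Icc_succ_left_eq_Ioc 0 K)

theorem card_divisorPairs_le (K : ℕ) : (#(divisorPairs K) : ℝ) ≤ K * (1 + log K) :=
  calc (#(divisorPairs K) : ℝ) = ∑ d ∈ Icc 1 K, ((K / d : ℕ) : ℝ) := by
        rw [card_divisorPairs, Nat.cast_sum]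
    _ ≤ ∑ d ∈ Icc 1 K, (K : ℝ) * (d : ℝ)⁻¹ :=
        sum_le_sum fun d _ => Nat.cast_div_le.trans_eq (div_eq_mul_inv _ _)
    _ = K * harmonic K := by
        rw [← mul_sum, harmonic_eq_sum_Icc]; push_cast; rfl
    _ ≤ K * (1 + log K) := mul_le_mul_of_nonneg_left (harmonic_le_one_add_log K) K.cast_nonneg

noncomputable def intDivisorPairs (K : ℕ) : Finset (ℤ × ℤ) :=
  {p ∈ Icc (-K : ℤ) K ×ˢ Icc (-K : ℤ) K | p.2 ≠ 0 ∧ p.1 ∣ p.2}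

theorem card_intDivisorPairs_le (K : ℕ) : #(intDivisorPairs K) ≤ 4 * #(divisorPairs K) := by
  let signs : Finset ℤ := {1, -1}
  have sign_mem {z : ℤ} (hz : z ≠ 0) : z.sign ∈ signs := by
    rcases z.sign_trichotomy with h | h | h <;> simp_all [signs]
  have hsub : intDivisorPairs K ⊆ ((signs ×ˢ signs) ×ˢ divisorPairs K).image
      fun q => (q.1.1 * q.2.1, q.1.2 * q.2.2) := by
    rintro ⟨x, b⟩ hp
    simp only [intDivisorPairs, mem_filter, mem_product, mem_Icc] at hp
    obtain ⟨⟨hx, hb⟩, hb0, hdvd⟩ := hp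
    have hx0 : x ≠ 0 := by rintro rfl; exact hb0 (zero_dvd_iff.mp hdvd)
    refine mem_image.2 ⟨((x.sign, b.sign), (x.natAbs, b.natAbs)), ?_, ?_⟩
    · simp only [divisorPairs, mem_product, mem_filter, mem_Icc, Int.natAbs_dvd_natAbs]
      exact ⟨⟨sign_mem hx0, sign_mem hb0⟩, ⟨by omega, by omega⟩, hdvd⟩
    · simp only [Int.sign_mul_natAbs]
  calc #(intDivisorPairs K) ≤ #((signs ×ˢ signs) ×ˢ divisorPairs K) :=
        (card_le_card hsub).trans card_image_le
    _ = 4 * #(divisorPairs K) := by simp [signs, card_product]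

def trinomialsWithIntegerRoot (n r : ℕ) (H : ℝ) : Set (ℤ × ℤ) :=
  {p | (|p.1| : ℝ) ≤ H ∧ (|p.2| : ℝ) ≤ H ∧ ∃ x : ℤ, x ^ n + p.1 * x ^ (n - r) + p.2 = 0}

theorem trinomialsWithIntegerRoot_natFloor (n r : ℕ) {H : ℝ} (hH : 0 ≤ H) :
    trinomialsWithIntegerRoot n r ⌊H⌋₊ = trinomialsWithIntegerRoot n r H := by
  have abs_le_floor_iff (z : ℤ) : (|z| : ℝ) ≤ ⌊H⌋₊ ↔ (|z| : ℝ) ≤ H := by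
    rw [← Int.cast_abs, Int.abs_eq_natAbs, Int.cast_natCast, Nat.cast_le, Nat.le_floor_iff hH]
  ext p
  simp only [trinomialsWithIntegerRoot, Set.mem_ofPred_eq, abs_le_floor_iff]

theorem trinomialsWithIntegerRoot_subset {n r : ℕ} (hrn : r < n) (K : ℕ) :
    trinomialsWithIntegerRoot n r K ⊆ ↑(Icc (-K : ℤ) K ×ˢ {0} ∪
      (intDivisorPairs K).image fun q => (-(q.1 ^ n + q.2) / q.1 ^ (n - r), q.2)) := by
  rintro ⟨a, b⟩ ⟨haK, hbK, x, hx⟩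
  have ha : a ∈ Icc (-K : ℤ) K := mem_Icc.2 (abs_le.1 (by exact_mod_cast haK))
  have hb : b ∈ Icc (-K : ℤ) K := mem_Icc.2 (abs_le.1 (by exact_mod_cast hbK))
  rcases eq_or_ne b 0 with rfl | hb0
  · exact mem_coe.2 (mem_union_left _ (mem_product.2 ⟨ha, mem_singleton_self 0⟩))
  have hdvd := dvd_of_trinomial_root hrn hx
  have hx0 : x ≠ 0 := by rintro rfl; exact hb0 (zero_dvd_iff.mp hdvd)
  have hxK : x ∈ Icc (-K : ℤ) K := by
    have := Int.natAbs_le_of_dvd_ne_zero hdvd hb0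
    rw [mem_Icc] at hb ⊢; omega
  refine mem_coe.2 (mem_union_right _ (mem_image.2 ⟨(x, b), ?_, ?_⟩))
  · simp only [intDivisorPairs, mem_filter, mem_product]
    exact ⟨⟨hxK, hb⟩, hb0, hdvd⟩
  · rw [← eq_ediv_of_trinomial_root hx0 hx]

theorem ncard_trinomialsWithIntegerRoot_le {n r : ℕ} (hrn : r < n) (K : ℕ) :
    ((trinomialsWithIntegerRoot n r K).ncard : ℝ) ≤ 2 * K + 1 + 4 * (K * (1 + log K)) := by
  have hcover : (trinomialsWithIntegerRoot n r K).ncard ≤ 2 * K + 1 + 4 * #(divisorPairs K) := by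
    refine ((Set.ncard_le_ncard (trinomialsWithIntegerRoot_subset hrn K)
      (finite_toSet _)).trans_eq (Set.ncard_coe_finset _)).trans ?_
    refine (card_union_le _ _).trans ?_
    rw [card_product, card_singleton, mul_one, Int.card_Icc]
    grw [card_image_le, card_intDivisorPairs_le K]
    omega
  calc ((trinomialsWithIntegerRoot n r K).ncard : ℝ) ≤ 2 * K + 1 + 4 * #(divisorPairs K) := by
        exact_mod_cast hcover
    _ ≤ 2 * K + 1 + 4 * (K * (1 + log K)) := by linarith [card_divisorPairs_le K]

theorem mul_one_add_log_le_rpow {H ε : ℝ} (hH : 1 ≤ H) (hε : 0 < ε) :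
    H * (1 + log H) ≤ (1 + 1 / ε) * H ^ (1 + ε) := by
  have hH0 : 0 < H := by linarith
  calc H * (1 + log H) = H + H * log H := by ring
    _ ≤ H * H ^ ε + H * (H ^ ε / ε) :=
        add_le_add (le_mul_of_one_le_right hH0.le (one_le_rpow hH hε.le))
          (mul_le_mul_of_nonneg_left (log_le_rpow_div hH0.le hε) hH0.le)
    _ = (1 + 1 / ε) * H ^ (1 + ε) := by rw [rpow_add hH0, rpow_one]; ring

theorem mul_one_add_log_le_of_le {K H : ℝ} (hK : 0 ≤ K) (hKH : K ≤ H) (hH : 1 ≤ H) :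
    K * (1 + log K) ≤ H * (1 + log H) := by
  have hlogH := log_nonneg hH
  rcases hK.eq_or_lt with rfl | hK
  · simp only [zero_mul]
    positivity
  calc K * (1 + log K) ≤ K * (1 + log H) := by gcongr
    _ ≤ H * (1 + log H) := by gcongr

theorem count_trinomials_with_integer_root_general (n r : ℕ) (hrn : r < n)
    (ε : ℝ) (hε : 0 < ε) :
    ∃ C : ℝ, ∀ H : ℝ, 1 ≤ H →
      (Set.ncard {p : ℤ × ℤ |
          (|p.1| : ℝ) ≤ H ∧ (|p.2| : ℝ) ≤ H ∧
          ∃ x : ℤ, x ^ n + p.1 * x ^ (n - r) + p.2 = 0} : ℝ)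
        ≤ C * H ^ (1 + 1 / (n : ℝ) + ε) := by
  refine ⟨7 + 4 / ε, fun H hH => ?_⟩
  have hH0 : 0 ≤ H := by linarith
  have hK := mul_one_add_log_le_of_le (Nat.cast_nonneg ⌊H⌋₊) (Nat.floor_le hH0) hH
  have hlog := mul_one_add_log_le_rpow hH hε
  have hpow : H ≤ H ^ (1 + ε) := by
    simpa using rpow_le_rpow_of_exponent_le hH (by linarith : (1 : ℝ) ≤ 1 + ε)
  calc ((trinomialsWithIntegerRoot n r H).ncard : ℝ)
      = (trinomialsWithIntegerRoot n r ⌊H⌋₊).ncard := by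
        rw [trinomialsWithIntegerRoot_natFloor n r hH0]
    _ ≤ 2 * ⌊H⌋₊ + 1 + 4 * (⌊H⌋₊ * (1 + log ⌊H⌋₊)) := ncard_trinomialsWithIntegerRoot_le hrn _
    _ ≤ 3 * H ^ (1 + ε) + 4 * ((1 + 1 / ε) * H ^ (1 + ε)) := by linarith [Nat.floor_le hH0]
    _ = (7 + 4 / ε) * H ^ (1 + ε) := by ring
    _ ≤ (7 + 4 / ε) * H ^ (1 + 1 / (n : ℝ) + ε) := by
        gcongr
        linarith [show (0 : ℝ) ≤ 1 / n by positivity]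

/-- Let `n` and `r` be coprime positive integers with `n > r`. Then there are at most
`O_{n,ε}(H^(1+1/n+ε))` pairs `(a_r, a_n)` of integers of absolute value at most `H` such that
the trinomial `X^n + a_r X^(n-r) + a_n` has an integer root. -/
theorem count_trinomials_with_integer_root (n r : ℕ) (hr : 0 < r) (hrn : r < n)
    (hco : Nat.Coprime n r) (ε : ℝ) (hε : 0 < ε) :
    ∃ C : ℝ, ∀ H : ℝ, 1 ≤ H →
      (Set.ncard {p : ℤ × ℤ |
          (|p.1| : ℝ) ≤ H ∧ (|p.2| : ℝ) ≤ H ∧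
          ∃ x : ℤ, x ^ n + p.1 * x ^ (n - r) + p.2 = 0} : ℝ)
        ≤ C * H ^ (1 + 1 / (n : ℝ) + ε) :=
  count_trinomials_with_integer_root_general n r hrn ε hε
end
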